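/- arXiv:0801.0051 — 2 statements merged into one kernel-verified Lean document; each statement's English description precedes it below -/
import Mathlib

section
/- For every integer L ≥ 1 one has M_L = Σ_{s ≥ L} binom(s−1, L−1) m_s, the series on the right-hand side being convergent. -/
open scoped Classical
open MeasureTheory

/-- Cumulative sums `a₀ + a₁ + ⋯ + a_k` of the regular continued fraction
expansion of `x` (`none` once the expansion has terminated). -/
noncomputable def cfSum (x : ℝ) : ℕ → Option ℝ
  | 0 => some (⌊x⌋ : ℝ)
  | (k + 1) => (cfSum x k).bind fun s =>
      ((GenContFract.of x).partDens.get? k).map fun b => s + b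

/-- The Minkowski question mark function in its version on `[0, ∞)`:
`F([a₀; a₁, a₂, …]) = 1 - 2^{-a₀} + 2^{-(a₀+a₁)} - 2^{-(a₀+a₁+a₂)} + ⋯`. -/
noncomputable def minkQ (x : ℝ) : ℝ :=
  1 + ∑' k : ℕ, (cfSum x k).elim 0 fun s => (-1 : ℝ) ^ (k + 1) * (2 : ℝ) ^ (-s)

/-- `μ` is the Lebesgue–Stieltjes measure `dF` of the Minkowski question mark
function: it is supported on `[0, ∞)` and its cumulative distribution function
is `F = minkQ` there. -/
def IsMinkowskiMeasure (μ : Measure ℝ) : Prop :=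
  μ (Set.Iio 0) = 0 ∧ ∀ x : ℝ, 0 ≤ x → μ (Set.Iic x) = ENNReal.ofReal (minkQ x)

/-- The moment `m_L = ∫₀^∞ (x/(x+1))^L dF(x)`. -/
noncomputable def mMom (μ : Measure ℝ) (L : ℕ) : ℝ :=
  ∫ x, (x / (x + 1)) ^ L ∂μ

/-- The moment `M_L = ∫₀^∞ x^L dF(x)`. -/
noncomputable def MMom (μ : Measure ℝ) (L : ℕ) : ℝ :=
  ∫ x, x ^ L ∂μ

/-!
With `t = x / (x + 1) ∈ [0, 1)` one has `x = t / (1 - t)`, so the negative binomial series gives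
`x ^ L = ∑_{s ≥ L} binom(s-1, L-1) t ^ s` with nonnegative terms, and the identity follows by
integrating term by term. The only analytic input is that `x ^ L` is `dF`-integrable, which comes
from the exponential tail `μ [n, ∞) ≤ 2 ^ (1 - n)`, read off from `F(n) = 1 - 2 ^ (-n)`.
-/

open Set

lemma hasSum_choose_mul_pow {L : ℕ} (hL : 1 ≤ L) {t : ℝ} (ht : ‖t‖ < 1) :
    HasSum (fun j : ℕ => ((L + j - 1).choose (L - 1) : ℝ) * t ^ (L + j))
      ((t / (1 - t)) ^ L) := by
  obtain ⟨k, rfl⟩ := Nat.exists_eq_add_of_le' hL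
  have h := (hasSum_choose_mul_geometric_of_norm_lt_one k ht).mul_left (t ^ (k + 1))
  rw [mul_one_div, ← div_pow] at h
  refine h.congr_fun fun j => ?_
  rw [show k + 1 + j - 1 = j + k by omega, Nat.add_sub_cancel, pow_add]
  ring

lemma hasSum_choose_mul_div_add_one_pow {L : ℕ} (hL : 1 ≤ L) {x : ℝ} (hx : 0 ≤ x) :
    HasSum (fun j : ℕ => ((L + j - 1).choose (L - 1) : ℝ) * (x / (x + 1)) ^ (L + j))
      (x ^ L) := by
  have hx1 : 0 < x + 1 := by linarith
  have ht : ‖x / (x + 1)‖ < 1 := by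
    rw [Real.norm_of_nonneg (by positivity), div_lt_one hx1]
    linarith
  convert hasSum_choose_mul_pow hL ht using 2
  field_simp
  ring

theorem MeasureTheory.hasSum_integral_of_nonneg {α ι : Type*} [Countable ι] [MeasurableSpace α]
    {μ : Measure α} {F : ι → α → ℝ} {f : α → ℝ} (hF_meas : ∀ n, AEStronglyMeasurable (F n) μ)
    (hF_nonneg : ∀ n, 0 ≤ᵐ[μ] F n) (hf : Integrable f μ)
    (h_lim : ∀ᵐ a ∂μ, HasSum (fun n => F n a) (f a)) :
    HasSum (fun n => ∫ a, F n a ∂μ) (∫ a, f a ∂μ) := by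
  refine hasSum_integral_of_dominated_convergence F hF_meas (fun n => ?_)
    (h_lim.mono fun a ha => ha.summable) (hf.congr ?_) h_lim
  · filter_upwards [hF_nonneg n] with a ha
    rw [Real.norm_of_nonneg ha]
  · filter_upwards [h_lim] with a ha
    exact ha.tsum_eq.symm

theorem MeasureTheory.integrable_pow_of_measure_Ici_le {μ : Measure ℝ} (h0 : ∀ᵐ x ∂μ, 0 ≤ x)
    {C r : ℝ} (hr0 : 0 < r) (hr1 : r < 1)
    (htail : ∀ n : ℕ, μ (Ici (n : ℝ)) ≤ ENNReal.ofReal (C * r ^ n)) (L : ℕ) :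
    Integrable (fun x : ℝ => x ^ L) μ := by
  set g : ℕ → ℝ → ENNReal := fun n =>
    (Ico (n : ℝ) (n + 1)).indicator fun _ => ENNReal.ofReal (((n : ℝ) + 1) ^ L)
  have hpow_le : ∀ᵐ x ∂μ, ENNReal.ofReal (x ^ L) ≤ ∑' n, g n x := by
    filter_upwards [h0] with x hx
    have hmem : x ∈ Ico (⌊x⌋₊ : ℝ) (⌊x⌋₊ + 1) := ⟨Nat.floor_le hx, Nat.lt_floor_add_one x⟩
    refine le_trans ?_ (ENNReal.le_tsum ⌊x⌋₊)
    simp only [g, indicator_of_mem hmem]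
    exact ENNReal.ofReal_le_ofReal (pow_le_pow_left₀ hx hmem.2.le L)
  have hsummable : Summable fun n : ℕ => ((n : ℝ) + 1) ^ L * (C * r ^ n) := by
    have hr : ‖r‖ < 1 := by rwa [Real.norm_of_nonneg hr0.le]
    have hshift : Summable fun n : ℕ => ((n + 1 : ℕ) : ℝ) ^ L * r ^ (n + 1) :=
      (summable_nat_add_iff (f := fun n : ℕ => (n : ℝ) ^ L * r ^ n) 1).2
        (summable_pow_mul_geometric_of_norm_lt_one L hr)
    refine (hshift.mul_left (C / r)).congr fun n => ?_
    push_cast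
    rw [pow_succ]
    field_simp
  refine ⟨by fun_prop, (hasFiniteIntegral_iff_ofReal (h0.mono fun x hx => pow_nonneg hx L)).2 ?_⟩
  calc ∫⁻ x, ENNReal.ofReal (x ^ L) ∂μ
      ≤ ∫⁻ x, ∑' n, g n x ∂μ := lintegral_mono_ae hpow_le
    _ = ∑' n : ℕ, ENNReal.ofReal (((n : ℝ) + 1) ^ L) * μ (Ico (n : ℝ) (n + 1)) := by
        rw [lintegral_tsum fun n => (measurable_const.indicator measurableSet_Ico).aemeasurable]
        simp only [lintegral_indicator_const measurableSet_Ico]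
    _ ≤ ∑' n : ℕ, ENNReal.ofReal (((n : ℝ) + 1) ^ L * (C * r ^ n)) := by
        refine ENNReal.tsum_le_tsum fun n => ?_
        rw [ENNReal.ofReal_mul (by positivity)]
        exact mul_le_mul_right ((measure_mono Ico_subset_Ici_self).trans (htail n)) _
    _ < ⊤ := hsummable.tsum_ofReal_lt_top

lemma partDens_of_natCast (n k : ℕ) : (GenContFract.of (n : ℝ)).partDens.get? k = none := by
  rw [GenContFract.partDens, ← Int.cast_natCast, GenContFract.of_s_of_int, Stream'.Seq.map_nil,
    Stream'.Seq.get?_nil]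

lemma cfSum_natCast_succ (n k : ℕ) : cfSum (n : ℝ) (k + 1) = none := by
  rw [cfSum, partDens_of_natCast]
  cases cfSum (n : ℝ) k <;> rfl

lemma minkQ_natCast (n : ℕ) : minkQ n = 1 - 2⁻¹ ^ n := by
  rw [minkQ, tsum_eq_single 0 fun k hk => ?_]
  · simp [cfSum, Real.rpow_neg, inv_pow, sub_eq_add_neg]
  · obtain ⟨m, rfl⟩ := Nat.exists_eq_succ_of_ne_zero hk
    rw [cfSum_natCast_succ]
    rfl

namespace IsMinkowskiMeasure

variable {μ : Measure ℝ}

lemma ae_nonneg (hμ : IsMinkowskiMeasure μ) : ∀ᵐ x ∂μ, 0 ≤ x :=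
  ae_iff.2 (measure_mono_null (fun _ hx => not_le.1 hx) hμ.1)

lemma measure_Iic_natCast (hμ : IsMinkowskiMeasure μ) (n : ℕ) :
    μ (Iic (n : ℝ)) = ENNReal.ofReal (1 - 2⁻¹ ^ n) := by
  rw [hμ.2 _ n.cast_nonneg, minkQ_natCast]

lemma measure_univ_le_one (hμ : IsMinkowskiMeasure μ) : μ univ ≤ 1 := by
  have hunion : ⋃ n : ℕ, Iic (n : ℝ) = univ :=
    eq_univ_of_forall fun x => mem_iUnion.2 (exists_nat_ge x)
  rw [← hunion, Monotone.measure_iUnion fun m n hmn => Iic_subset_Iic.2 (by exact_mod_cast hmn)]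
  refine iSup_le fun n => ?_
  rw [hμ.measure_Iic_natCast]
  exact ENNReal.ofReal_le_one.2 (sub_le_self _ (by positivity))

lemma measure_Ioi_natCast_le (hμ : IsMinkowskiMeasure μ) (n : ℕ) :
    μ (Ioi (n : ℝ)) ≤ ENNReal.ofReal (2⁻¹ ^ n) := by
  rw [← compl_Iic, measure_compl measurableSet_Iic (by simp [hμ.measure_Iic_natCast]),
    hμ.measure_Iic_natCast]
  calc μ univ - ENNReal.ofReal (1 - 2⁻¹ ^ n)
      ≤ 1 - ENNReal.ofReal (1 - 2⁻¹ ^ n) := tsub_le_tsub_right hμ.measure_univ_le_one _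
    _ = ENNReal.ofReal (2⁻¹ ^ n) := by
        have hle : (2⁻¹ : ℝ) ^ n ≤ 1 := pow_le_one₀ (by norm_num) (by norm_num)
        rw [← ENNReal.ofReal_one, ← ENNReal.ofReal_sub _ (sub_nonneg.2 hle), sub_sub_cancel]

lemma measure_Ici_natCast_le (hμ : IsMinkowskiMeasure μ) (n : ℕ) :
    μ (Ici (n : ℝ)) ≤ ENNReal.ofReal (2 * 2⁻¹ ^ n) := by
  cases n with
  | zero =>
    calc μ (Ici ((0 : ℕ) : ℝ)) ≤ μ univ := measure_mono (subset_univ _)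
      _ ≤ ENNReal.ofReal (2 * 2⁻¹ ^ 0) := hμ.measure_univ_le_one.trans (by norm_num)
  | succ m =>
    calc μ (Ici ((m + 1 : ℕ) : ℝ)) ≤ μ (Ioi (m : ℝ)) :=
          measure_mono fun x hx => by push_cast at hx; simp only [mem_Ioi]; linarith [mem_Ici.1 hx]
      _ ≤ ENNReal.ofReal (2⁻¹ ^ m) := hμ.measure_Ioi_natCast_le m
      _ = ENNReal.ofReal (2 * 2⁻¹ ^ (m + 1)) := by
          rw [pow_succ, mul_left_comm, mul_inv_cancel₀ two_ne_zero, mul_one]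

lemma integrable_pow (hμ : IsMinkowskiMeasure μ) (L : ℕ) : Integrable (fun x : ℝ => x ^ L) μ :=
  integrable_pow_of_measure_Ici_le hμ.ae_nonneg (by norm_num) (by norm_num)
    hμ.measure_Ici_natCast_le L

end IsMinkowskiMeasure

/-- `M_L = Σ_{s ≥ L} binom(s−1, L−1) m_s` for every `L ≥ 1`, the series being
convergent (indexing `s = L + j`, `j ≥ 0`). -/
theorem MMom_eq_tsum_choose_mul_mMom (μ : Measure ℝ) (hμ : IsMinkowskiMeasure μ)
    (L : ℕ) (hL : 1 ≤ L) :
    (Summable fun j : ℕ => ((L + j - 1).choose (L - 1) : ℝ) * mMom μ (L + j)) ∧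
    MMom μ L = ∑' j : ℕ, ((L + j - 1).choose (L - 1) : ℝ) * mMom μ (L + j) := by
  have hsum : HasSum (fun j : ℕ => ((L + j - 1).choose (L - 1) : ℝ) * mMom μ (L + j))
      (MMom μ L) := by
    simp only [mMom, MMom, ← integral_const_mul]
    refine hasSum_integral_of_nonneg (fun j => (by fun_prop : Measurable _).aestronglyMeasurable)
      (fun j => ?_) (hμ.integrable_pow L)
      (hμ.ae_nonneg.mono fun x hx => hasSum_choose_mul_div_add_one_pow hL hx)
    filter_upwards [hμ.ae_nonneg] with x hx
    positivity
  exact ⟨hsum.summable, hsum.tsum_eq.symm⟩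
end

section
/- The dyadic period function G satisfies the symmetry property G(z+1) = −(1/z^2)·G(1/z + 1) − 1/z for every z ∈ ℂ ∖ (0,∞), z ≠ 0; moreover G(z) → 0 as |z| → ∞ in such a way that the distance from z to the positive real axis ℝ_+ tends to infinity. -/
open scoped Classical
open MeasureTheory

/-- The cut plane `ℂ ∖ (0, ∞)`. -/
def cutPlaneZero : Set ℂ := {z : ℂ | z.im ≠ 0 ∨ z.re ≤ 0}

/-- The dyadic period function
`G(z) = ∫₀^∞ (x/(x+1))/(1 − z·x/(x+1)) dF(x)`, holomorphic on `ℂ ∖ (1,∞)`,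
with `G(z) = Σ_{L≥1} m_L z^{L−1}` for `|z| < 1`. -/
noncomputable def dyadicG (μ : Measure ℝ) (z : ℂ) : ℂ :=
  ∫ x, ((x : ℂ) / ((x : ℂ) + 1)) * (1 - z * ((x : ℂ) / ((x : ℂ) + 1)))⁻¹ ∂μ

/-!
Since `F(1/x) = 1 - F(x)` (the continued fraction of `1/x` is that of `x` shifted by one place,
behind `a₀ = 0`), `dF` is a probability measure on `(0, ∞)` invariant under `x ↦ 1/x`.
For `t = x/(x+1)` one has `t/(1 - w t) = 1/(1 + 1/x - w)`. Hence `G(z+1) = ∫ dF(x)/(1/x - z)`,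
which by the invariance is the Stieltjes transform `S(z) = ∫ dF(x)/(x - z)`, while
`G(1/z + 1) = ∫ xz/(z - x) dF(x) = -z - z² S(z)`; eliminating `S(z)` gives the functional equation.
The same form of the integrand gives `|G(z)| ≤ 1/dist(z, ℝ₊)`, because `1 + 1/x ∈ ℝ₊`.
-/

open Set Filter Topology ProbabilityTheory

section ContinuedFraction

variable {x : ℝ}

lemma floor_add_le_cfSum {k : ℕ} {s : ℝ} (h : cfSum x k = some s) : ⌊x⌋ + (k : ℝ) ≤ s := by
  induction k generalizing s with
  | zero => simp_all [cfSum]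
  | succ k ih =>
    simp only [cfSum, Option.bind_eq_some_iff, Option.map_eq_some_iff] at h
    obtain ⟨s, hs, b, hb, rfl⟩ := h
    have := GenContFract.of_one_le_get?_partDen hb
    push_cast
    linarith [ih hs]

lemma cfSum_intCast_succ (a : ℤ) (k : ℕ) : cfSum a (k + 1) = none := by
  have hpd (n : ℕ) : (GenContFract.of (a : ℝ)).partDens.get? n = none := by
    rw [GenContFract.partDen_none_iff_s_none, GenContFract.of_s_of_int]
    exact Stream'.Seq.get?_nil n
  induction k with
  | zero => simp [cfSum, hpd]
  | succ k ih => rw [cfSum, ih]; rfl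

section Inv

variable (hx : 1 < x)
include hx

lemma Int.fract_inv_of_one_lt : Int.fract x⁻¹ = x⁻¹ :=
  Int.fract_eq_self.2 ⟨by positivity, inv_lt_one_of_one_lt₀ hx⟩

lemma partDens_get?_of_inv_zero :
    (GenContFract.of x⁻¹).partDens.get? 0 = some (⌊x⌋ : ℝ) := by
  have := GenContFract.of_s_head (v := x⁻¹) (by rw [Int.fract_inv_of_one_lt hx]; positivity)
  rw [Int.fract_inv_of_one_lt hx, inv_inv] at this
  simp only [GenContFract.partDens, Stream'.Seq.map_get?]
  rw [← Stream'.Seq.head, this]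
  rfl

lemma partDens_get?_of_inv_succ (n : ℕ) :
    (GenContFract.of x⁻¹).partDens.get? (n + 1) = (GenContFract.of x).partDens.get? n := by
  simp only [GenContFract.partDens, Stream'.Seq.map_get?, GenContFract.of_s_succ,
    Int.fract_inv_of_one_lt hx, inv_inv]

lemma cfSum_inv_zero : cfSum x⁻¹ 0 = some 0 := by
  simp [cfSum, Int.floor_eq_zero_iff.2 ⟨by positivity, inv_lt_one_of_one_lt₀ hx⟩]

lemma cfSum_inv_succ (k : ℕ) : cfSum x⁻¹ (k + 1) = cfSum x k := by
  induction k with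
  | zero => rw [cfSum.eq_2, cfSum_inv_zero hx, partDens_get?_of_inv_zero hx]; simp [cfSum]
  | succ k ih => rw [cfSum, ih, partDens_get?_of_inv_succ hx, ← cfSum]

end Inv

end ContinuedFraction

section MinkowskiFunction

noncomputable def minkQTerm (x : ℝ) (k : ℕ) : ℝ :=
  (cfSum x k).elim 0 fun s => (-1 : ℝ) ^ (k + 1) * (2 : ℝ) ^ (-s)

lemma minkQ_eq_one_add_tsum (x : ℝ) : minkQ x = 1 + ∑' k, minkQTerm x k := rfl

lemma abs_minkQTerm_le (x : ℝ) (k : ℕ) :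
    |minkQTerm x k| ≤ (2 : ℝ) ^ (-(⌊x⌋ : ℝ)) * (1 / 2) ^ k := by
  rcases hk : cfSum x k with _ | s
  · simp only [minkQTerm, hk, Option.elim, abs_zero]
    positivity
  · calc |minkQTerm x k| = (2 : ℝ) ^ (-s) := by
          simp [minkQTerm, hk, abs_of_pos (Real.rpow_pos_of_pos two_pos _)]
      _ ≤ (2 : ℝ) ^ (-(⌊x⌋ + k : ℝ)) :=
        Real.rpow_le_rpow_of_exponent_le one_le_two (by linarith [floor_add_le_cfSum hk])
      _ = (2 : ℝ) ^ (-(⌊x⌋ : ℝ)) * (1 / 2) ^ k := by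
        rw [neg_add, Real.rpow_add two_pos, Real.rpow_neg two_pos.le (k : ℝ),
          Real.rpow_natCast, one_div, inv_pow]

lemma summable_minkQTerm (x : ℝ) : Summable (minkQTerm x) :=
  .of_norm_bounded ((summable_geometric_two).mul_left _) (abs_minkQTerm_le x)

lemma minkQ_intCast (a : ℤ) : minkQ a = 1 - (2 : ℝ) ^ (-(a : ℝ)) := by
  have hterm : ∀ k ≠ 0, minkQTerm a k = 0 := by
    rintro (_ | k) hk
    · contradiction
    · simp [minkQTerm, cfSum_intCast_succ]
  rw [minkQ_eq_one_add_tsum, tsum_eq_single 0 hterm]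
  simp [minkQTerm, cfSum]
  ring

lemma minkQ_zero : minkQ 0 = 0 := by
  simpa using minkQ_intCast 0

lemma minkQ_inv_of_one_lt {x : ℝ} (hx : 1 < x) : minkQ x⁻¹ = 1 - minkQ x := by
  have hzero : minkQTerm x⁻¹ 0 = -1 := by simp [minkQTerm, cfSum_inv_zero hx]
  have hsucc (k : ℕ) : minkQTerm x⁻¹ (k + 1) = -minkQTerm x k := by
    rw [minkQTerm, minkQTerm, cfSum_inv_succ hx]
    cases cfSum x k <;> simp [pow_succ]
  rw [minkQ_eq_one_add_tsum, minkQ_eq_one_add_tsum, (summable_minkQTerm _).tsum_eq_zero_add,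
    hzero, tsum_congr hsucc, tsum_neg]
  ring

lemma minkQ_inv {x : ℝ} (hx : 0 < x) : minkQ x⁻¹ = 1 - minkQ x := by
  rcases lt_trichotomy x 1 with h | rfl | h
  · have := minkQ_inv_of_one_lt ((one_lt_inv₀ hx).2 h)
    rw [inv_inv] at this
    linarith
  · have := minkQ_intCast 1
    norm_num [Real.rpow_neg_one] at this
    rw [inv_one, this]
    norm_num
  · exact minkQ_inv_of_one_lt h

end MinkowskiFunction

section InversionInvariance

variable {μ : Measure ℝ}

-- Inversion turns the left limit at `c` into a right limit at `c⁻¹`, where a cdf is continuous.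
lemma leftLim_cdf_of_cdf_inv (hinv : ∀ x, 0 < x → cdf μ x⁻¹ = 1 - cdf μ x) {c : ℝ}
    (hc : 0 < c) : Function.leftLim (cdf μ) c = 1 - cdf μ c⁻¹ := by
  have h_inv : Tendsto (·⁻¹) (𝓝[<] c) (𝓝[>] c⁻¹) := by
    refine tendsto_nhdsWithin_of_tendsto_nhds_of_eventually_within _
      ((tendsto_inv₀ hc.ne').mono_left nhdsWithin_le_nhds) ?_
    filter_upwards [Ioo_mem_nhdsLT hc] with a ha
    exact (inv_lt_inv₀ hc ha.1).2 ha.2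
  have h_right : Tendsto (cdf μ) (𝓝[>] c⁻¹) (𝓝 (cdf μ c⁻¹)) :=
    ((cdf μ).right_continuous _).mono Ioi_subset_Ici_self
  refine tendsto_nhds_unique ((cdf μ).mono.tendsto_leftLim c) ?_
  refine (tendsto_const_nhds.sub (h_right.comp h_inv)).congr' ?_
  filter_upwards [Ioo_mem_nhdsLT hc] with a ha
  have := hinv a⁻¹ (inv_pos.2 ha.1)
  rw [inv_inv] at this
  simp [this]

lemma map_inv_eq_self_of_cdf_inv [IsProbabilityMeasure μ] (h0 : μ (Iic 0) = 0)
    (hinv : ∀ x, 0 < x → cdf μ x⁻¹ = 1 - cdf μ x) : μ.map (·⁻¹) = μ := by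
  refine Measure.ext_of_Iic _ _ fun c => ?_
  rw [Measure.map_apply measurable_inv measurableSet_Iic]
  rcases le_or_gt c 0 with hc | hc
  · have hsub : (·⁻¹) ⁻¹' Iic c ⊆ Iic (0 : ℝ) := fun x hx => inv_nonpos.1 (le_trans hx hc)
    rw [measure_mono_null hsub h0, measure_mono_null (Iic_subset_Iic.2 hc) h0]
  · have hpre : (·⁻¹) ⁻¹' Iic c = Iic 0 ∪ Ici c⁻¹ := by
      ext x
      rcases le_or_gt x 0 with hx | hx
      · simp [hx, le_trans (inv_nonpos.2 hx) hc.le]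
      · simp [hx.not_ge, inv_le_comm₀ hx hc]
    have hIci := (cdf μ).measure_Ici (tendsto_cdf_atTop μ) c⁻¹
    rw [measure_cdf, leftLim_cdf_of_cdf_inv hinv (inv_pos.2 hc), inv_inv, sub_sub_cancel] at hIci
    rw [hpre, measure_congr (union_ae_eq_right_of_ae_eq_empty (ae_eq_empty.2 h0)), hIci,
      ofReal_cdf]

end InversionInvariance

namespace IsMinkowskiMeasure

variable {μ : Measure ℝ} (hμ : IsMinkowskiMeasure μ)
include hμ

lemma measure_Iic_zero : μ (Iic 0) = 0 := by
  rw [hμ.2 0 le_rfl, minkQ_zero, ENNReal.ofReal_zero]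

lemma measure_univ : μ univ = 1 := by
  have hIic (n : ℕ) : μ (Iic n) = ENNReal.ofReal (1 - (1 / 2) ^ n) := by
    rw [hμ.2 n n.cast_nonneg, ← Int.cast_natCast, minkQ_intCast, Int.cast_natCast,
      Real.rpow_neg two_pos.le, Real.rpow_natCast, one_div, inv_pow]
  refine tendsto_nhds_unique ((tendsto_measure_Iic_atTop μ).comp tendsto_natCast_atTop_atTop) ?_
  have hlim := tendsto_const_nhds (x := (1 : ℝ)).sub
    (tendsto_pow_atTop_nhds_zero_of_lt_one (r := (1 / 2 : ℝ)) (by norm_num) (by norm_num))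
  simpa [Function.comp_def, hIic] using ENNReal.tendsto_ofReal hlim

lemma isProbabilityMeasure : IsProbabilityMeasure μ := ⟨hμ.measure_univ⟩

lemma ae_pos : ∀ᵐ x ∂μ, 0 < x :=
  measure_mono_null (fun x (hx : ¬0 < x) => le_of_not_gt hx) hμ.measure_Iic_zero

lemma minkQ_le_one {x : ℝ} (hx : 0 ≤ x) : minkQ x ≤ 1 := by
  rw [← ENNReal.ofReal_le_one, ← hμ.2 x hx, ← hμ.measure_univ]
  exact measure_mono (subset_univ _)

lemma minkQ_nonneg {x : ℝ} (hx : 0 ≤ x) : 0 ≤ minkQ x := by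
  rcases hx.eq_or_lt with rfl | hx
  · rw [minkQ_zero]
  · have := minkQ_inv (inv_pos.2 hx)
    rw [inv_inv] at this
    linarith [hμ.minkQ_le_one (inv_pos.2 hx).le]

lemma cdf_eq {x : ℝ} (hx : 0 ≤ x) : cdf μ x = minkQ x := by
  have := hμ.isProbabilityMeasure
  rw [← ENNReal.ofReal_eq_ofReal_iff (cdf_nonneg μ x) (hμ.minkQ_nonneg hx), ofReal_cdf, hμ.2 x hx]

lemma map_inv : μ.map (·⁻¹) = μ := by
  have := hμ.isProbabilityMeasure
  refine map_inv_eq_self_of_cdf_inv hμ.measure_Iic_zero fun x hx => ?_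
  rw [hμ.cdf_eq (inv_pos.2 hx).le, hμ.cdf_eq hx.le, minkQ_inv hx]

end IsMinkowskiMeasure

section PeriodFunction

def nonnegRealAxis : Set ℂ := {w : ℂ | w.im = 0 ∧ 0 ≤ w.re}

lemma isClosed_nonnegRealAxis : IsClosed nonnegRealAxis :=
  (isClosed_eq Complex.continuous_im continuous_const).inter
    (isClosed_le continuous_const Complex.continuous_re)

lemma ofReal_mem_nonnegRealAxis {x : ℝ} (hx : 0 ≤ x) : (x : ℂ) ∈ nonnegRealAxis := by
  simp [nonnegRealAxis, hx]

lemma infDist_nonnegRealAxis_pos {z : ℂ} (hz : z ∈ cutPlaneZero) (hz0 : z ≠ 0) :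
    0 < Metric.infDist z nonnegRealAxis := by
  refine (isClosed_nonnegRealAxis.notMem_iff_infDist_pos
    ⟨0, ofReal_mem_nonnegRealAxis le_rfl⟩).1 fun ⟨him, hre⟩ => hz0 ?_
  rcases hz with h | h
  · exact absurd him h
  · exact Complex.ext (le_antisymm h hre) him

lemma norm_inv_ofReal_sub_le {z : ℂ} (hd : 0 < Metric.infDist z nonnegRealAxis) {x : ℝ}
    (hx : 0 ≤ x) : ‖((x : ℂ) - z)⁻¹‖ ≤ (Metric.infDist z nonnegRealAxis)⁻¹ := by
  rw [norm_inv, ← dist_eq_norm, dist_comm]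
  exact inv_anti₀ hd (Metric.infDist_le_dist_of_mem (ofReal_mem_nonnegRealAxis hx))

lemma mul_inv_one_sub_mul {K : Type*} [Field K] {t : K} (ht : t ≠ 0) (z : K) :
    t * (1 - z * t)⁻¹ = (t⁻¹ - z)⁻¹ := by
  rw [show t⁻¹ - z = t⁻¹ * (1 - z * t) by field_simp, mul_inv, inv_inv]

variable {μ : Measure ℝ}

lemma dyadicG_eq_integral (hpos : ∀ᵐ x ∂μ, 0 < x) (w : ℂ) :
    dyadicG μ w = ∫ x, (1 + (x : ℂ)⁻¹ - w)⁻¹ ∂μ := by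
  refine integral_congr_ae (hpos.mono fun x hx => ?_)
  have hx0 : (x : ℂ) ≠ 0 := by exact_mod_cast hx.ne'
  have hx1 : (x : ℂ) + 1 ≠ 0 := by exact_mod_cast (by linarith : x + 1 ≠ 0)
  dsimp only
  rw [mul_inv_one_sub_mul (div_ne_zero hx0 hx1), inv_div, add_div, div_self hx0, one_div]

lemma norm_dyadicG_le [IsProbabilityMeasure μ] (hpos : ∀ᵐ x ∂μ, 0 < x) {z : ℂ}
    (hd : 0 < Metric.infDist z nonnegRealAxis) :
    ‖dyadicG μ z‖ ≤ (Metric.infDist z nonnegRealAxis)⁻¹ := by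
  have hbound : ∀ᵐ x : ℝ ∂μ, ‖(1 + (x : ℂ)⁻¹ - z)⁻¹‖ ≤ (Metric.infDist z nonnegRealAxis)⁻¹ :=
    hpos.mono fun x hx => by
      simpa using norm_inv_ofReal_sub_le hd (by positivity : 0 ≤ 1 + x⁻¹)
  simpa [dyadicG_eq_integral hpos] using norm_integral_le_of_norm_le_const hbound

noncomputable def stieltjesTransform (μ : Measure ℝ) (z : ℂ) : ℂ :=
  ∫ x, ((x : ℂ) - z)⁻¹ ∂μ

lemma integrable_inv_ofReal_sub [IsFiniteMeasure μ] (hnonneg : ∀ᵐ x ∂μ, 0 ≤ x) {z : ℂ}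
    (hd : 0 < Metric.infDist z nonnegRealAxis) : Integrable (fun x : ℝ => ((x : ℂ) - z)⁻¹) μ :=
  .of_bound (by fun_prop) _ (hnonneg.mono fun _ hx => norm_inv_ofReal_sub_le hd hx)

lemma dyadicG_add_one (hpos : ∀ᵐ x ∂μ, 0 < x) (hinv : μ.map (·⁻¹) = μ) (z : ℂ) :
    dyadicG μ (z + 1) = stieltjesTransform μ z := by
  rw [dyadicG_eq_integral hpos, stieltjesTransform]
  conv_rhs => rw [← hinv]
  rw [integral_map measurable_inv.aemeasurable (by fun_prop)]
  congr with x
  push_cast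
  ring

lemma dyadicG_inv_add_one [IsProbabilityMeasure μ] (hpos : ∀ᵐ x ∂μ, 0 < x) {z : ℂ}
    (hd : 0 < Metric.infDist z nonnegRealAxis) :
    dyadicG μ (z⁻¹ + 1) = -z - z ^ 2 * stieltjesTransform μ z := by
  have hz : z ∉ nonnegRealAxis := fun h => hd.ne' (Metric.infDist_zero_of_mem h)
  have hz0 : z ≠ 0 := fun h => hz (h ▸ ofReal_mem_nonnegRealAxis le_rfl)
  have hint := integrable_inv_ofReal_sub (hpos.mono fun _ hx => hx.le) hd
  calc dyadicG μ (z⁻¹ + 1) = ∫ x, (-z - z ^ 2 * ((x : ℂ) - z)⁻¹) ∂μ := by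
        rw [dyadicG_eq_integral hpos]
        refine integral_congr_ae (hpos.mono fun x hx => ?_)
        have hx0 : (x : ℂ) ≠ 0 := by exact_mod_cast hx.ne'
        have hxz : (x : ℂ) - z ≠ 0 :=
          sub_ne_zero.2 fun h => hz (h ▸ ofReal_mem_nonnegRealAxis hx.le)
        dsimp only
        rw [show 1 + (x : ℂ)⁻¹ - (z⁻¹ + 1) = -(((x : ℂ) - z) / (x * z)) by field_simp; ring,
          inv_neg, inv_div]
        field_simp
        ring
    _ = -z - z ^ 2 * stieltjesTransform μ z := by
        rw [integral_sub (integrable_const _) (hint.const_mul _), integral_const_mul]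
        simp [stieltjesTransform]

end PeriodFunction

/-- The symmetry property `G(z+1) = −(1/z²)·G(1/z + 1) − 1/z` for
`z ∈ ℂ ∖ (0,∞)`, `z ≠ 0`; moreover `G(z) = o(1)` as `z → ∞` in such a way
that the distance from `z` to the positive real axis tends to infinity. -/
theorem dyadicG_symmetry_and_decay (μ : Measure ℝ) (hμ : IsMinkowskiMeasure μ) :
    (∀ z : ℂ, z ∈ cutPlaneZero → z ≠ 0 →
      dyadicG μ (z + 1) = -(z ^ 2)⁻¹ * dyadicG μ (z⁻¹ + 1) - z⁻¹) ∧
    ∀ ε : ℝ, 0 < ε → ∃ R : ℝ, ∀ z : ℂ,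
      R ≤ Metric.infDist z {w : ℂ | w.im = 0 ∧ 0 ≤ w.re} → ‖dyadicG μ z‖ ≤ ε := by
  have := hμ.isProbabilityMeasure
  refine ⟨fun z hz hz0 => ?_, fun ε hε => ⟨ε⁻¹, fun z hR => ?_⟩⟩
  · rw [dyadicG_add_one hμ.ae_pos hμ.map_inv,
      dyadicG_inv_add_one hμ.ae_pos (infDist_nonnegRealAxis_pos hz hz0)]
    field_simp
    ring
  · have hd : 0 < Metric.infDist z nonnegRealAxis := (inv_pos.2 hε).trans_le hR
    calc ‖dyadicG μ z‖ ≤ (Metric.infDist z nonnegRealAxis)⁻¹ := norm_dyadicG_le hμ.ae_pos hd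
      _ ≤ ε := inv_le_of_inv_le₀ hε hR
end
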